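/- arXiv:2307.11517 — 2 statements merged into one kernel-verified Lean document; each statement's English description precedes it below -/
import Mathlib

section
/- Let ω_1, ω_2 be class-K functions, let {A_i} be a countable family of pairwise disjoint open subsets of ℝ^n \ {0}, let V_i : ℝ^n → ℝ≥0 be functions satisfying ω_1(|x|) ≤ V_i(x) ≤ ω_2(|x|) on A_i, let c_i > 0 be bounded above by some c̄ and below by 0, and define W(x) = V_i(x) + c_i for x ∈ A_i, W(0) = 0. Then there exist class-K functions a_1, a_2 with a_1(|x|) ≤ W(x) ≤ a_2(|x|) for all x ∈ ⋃ A_i ∪ {0}, provided c_i ≤ ω_1(dist(A_i, 0)) for each i. -/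
/-- A class-K function: continuous, strictly increasing, vanishing at 0 (on [0,∞)). -/
def IsClassK (a : ℝ → ℝ) : Prop :=
  ContinuousOn a (Set.Ici 0) ∧ StrictMonoOn a (Set.Ici 0) ∧ a 0 = 0

/-- sandwich bound (2) for the patched function W. -/
theorem patched_W_sandwich
    (n : ℕ)
    (ω₁ ω₂ : ℝ → ℝ) (hω₁ : IsClassK ω₁) (hω₂ : IsClassK ω₂)
    (A : ℕ → Set (EuclideanSpace ℝ (Fin n)))
    (hAopen : ∀ i, IsOpen (A i))
    (hA0 : ∀ i, (0 : EuclideanSpace ℝ (Fin n)) ∉ A i)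
    (hdisj : ∀ i j, i ≠ j → Disjoint (A i) (A j))
    (V : ℕ → EuclideanSpace ℝ (Fin n) → ℝ)
    (hVnn : ∀ i x, 0 ≤ V i x)
    (hVsand : ∀ i, ∀ x ∈ A i, ω₁ ‖x‖ ≤ V i x ∧ V i x ≤ ω₂ ‖x‖)
    (c : ℕ → ℝ) (cbar : ℝ)
    (hc : ∀ i, 0 < c i ∧ c i ≤ cbar)
    (hcsmall : ∀ i, c i ≤ ω₁ (Metric.infDist 0 (A i)))
    (W : EuclideanSpace ℝ (Fin n) → ℝ)
    (hWA : ∀ i, ∀ x ∈ A i, W x = V i x + c i)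
    (hW0 : W 0 = 0) :
    ∃ a₁ a₂ : ℝ → ℝ, IsClassK a₁ ∧ IsClassK a₂ ∧
      ∀ x ∈ (⋃ i, A i) ∪ {(0 : EuclideanSpace ℝ (Fin n))},
        a₁ ‖x‖ ≤ W x ∧ W x ≤ a₂ ‖x‖ := by
  obtain ⟨h1c, h1m, h10⟩ := hω₁
  obtain ⟨h2c, h2m, h20⟩ := hω₂
  refine ⟨ω₁, ω₁ + ω₂, ⟨h1c, h1m, h10⟩,
    ⟨h1c.add h2c, fun x hx y hy hxy => add_lt_add (h1m hx hy hxy) (h2m hx hy hxy),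
      by simp [h10, h20]⟩, ?_⟩
  rintro x (hx | rfl)
  · obtain ⟨i, hi⟩ := Set.mem_iUnion.mp hx
    obtain ⟨hl, hu⟩ := hVsand i x hi
    have hW := hWA i x hi
    have hd : Metric.infDist 0 (A i) ≤ ‖x‖ := by
      simpa [dist_eq_norm] using Metric.infDist_le_dist_of_mem (x := (0:EuclideanSpace ℝ (Fin n))) hi
    have hci : c i ≤ ω₁ ‖x‖ :=
      (hcsmall i).trans (h1m.monotoneOn Metric.infDist_nonneg (norm_nonneg x) hd)
    constructor
    · rw [hW]; linarith [(hc i).1]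
    · rw [hW]; have := add_le_add hci hu; simpa [Pi.add_apply] using by linarith
  · simp [hW0, h10, h20]
end

section
/- Let A : ℝ^n → ℝ^{n×n} and B : ℝ^n → ℝ^{n×m} be Lipschitz continuous, fix ξ ∈ ℝ^n, F ∈ ℝ^{m×n}, and a symmetric positive definite P with x'P(A(ξ) + B(ξ)F)x ≤ −k|x|² for all x. Let x(t) solve x' = (A(x) + B(x)F)x with x(0) = ξ, and define V(x) = ½x'Px. Then for all t in an interval on which x(t) stays in a sufficiently small neighborhood of ξ (where ‖P‖(‖A(x(t)) − A(ξ)‖ + ‖B(x(t)) − B(ξ)‖·‖F‖) ≤ k/2), one has d/dt V(x(t)) ≤ −(k/2)|x(t)|², and hence V(x(t)) ≤ V(ξ) − (k/2)∫₀ᵗ |x(s)|² ds ≤ V(ξ). -/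
open scoped RealInnerProductSpace

/-- frozen-coefficient Lyapunov estimate (48)-(49). -/
theorem frozen_coefficient_lyapunov
    (n m : ℕ)
    (A : EuclideanSpace ℝ (Fin n) →
      (EuclideanSpace ℝ (Fin n) →L[ℝ] EuclideanSpace ℝ (Fin n)))
    (B : EuclideanSpace ℝ (Fin n) →
      (EuclideanSpace ℝ (Fin m) →L[ℝ] EuclideanSpace ℝ (Fin n)))
    (LA LB : NNReal) (hA : LipschitzWith LA A) (hB : LipschitzWith LB B)
    (ξ : EuclideanSpace ℝ (Fin n))
    (F : EuclideanSpace ℝ (Fin n) →L[ℝ] EuclideanSpace ℝ (Fin m))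
    (P : EuclideanSpace ℝ (Fin n) →L[ℝ] EuclideanSpace ℝ (Fin n))
    (hPsymm : ∀ x y, ⟪P x, y⟫ = ⟪x, P y⟫)
    (hPpos : ∀ x, x ≠ 0 → 0 < ⟪x, P x⟫)
    (k : ℝ) (hk : 0 < k)
    (hdecay : ∀ x, ⟪x, P ((A ξ + (B ξ).comp F) x)⟫ ≤ -k * ‖x‖ ^ 2)
    (T : ℝ) (hT : 0 < T)
    (x : ℝ → EuclideanSpace ℝ (Fin n))
    (hx0 : x 0 = ξ)
    (hode : ∀ t, HasDerivAt x ((A (x t) + (B (x t)).comp F) (x t)) t)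
    (hnear : ∀ t ∈ Set.Icc (0 : ℝ) T,
      ‖P‖ * (‖A (x t) - A ξ‖ + ‖B (x t) - B ξ‖ * ‖F‖) ≤ k / 2)
    (V : EuclideanSpace ℝ (Fin n) → ℝ)
    (hV : ∀ z, V z = (1 / 2) * ⟪z, P z⟫) :
    (∀ t ∈ Set.Icc (0 : ℝ) T,
        deriv (fun s => V (x s)) t ≤ -(k / 2) * ‖x t‖ ^ 2) ∧
    (∀ t ∈ Set.Icc (0 : ℝ) T,
        V (x t) ≤ V ξ - (k / 2) * ∫ s in (0 : ℝ)..t, ‖x s‖ ^ 2) ∧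
    (∀ t ∈ Set.Icc (0 : ℝ) T, V (x t) ≤ V ξ) := by

  set g : ℝ → ℝ := fun t => ⟪x t, P ((A (x t) + (B (x t)).comp F) (x t))⟫ with hg_def
  have hxc : Continuous x := continuous_iff_continuousAt.2 fun t => (hode t).continuousAt
  have hVd : ∀ t, HasDerivAt (fun s => V (x s)) (g t) t := by
    intro t
    have hx' := hode t
    have hPx : HasDerivAt (fun s => P (x s)) (P ((A (x t) + (B (x t)).comp F) (x t))) t :=
      P.hasFDerivAt.comp_hasDerivAt t hx'
    have h1 : HasDerivAt (fun s => ⟪x s, P (x s)⟫)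
        (⟪x t, P ((A (x t) + (B (x t)).comp F) (x t))⟫ +
          ⟪(A (x t) + (B (x t)).comp F) (x t), P (x t)⟫) t := hx'.inner ℝ hPx
    have hsym : ⟪(A (x t) + (B (x t)).comp F) (x t), P (x t)⟫ = g t := by
      rw [real_inner_comm, hPsymm]
    have h2 : HasDerivAt (fun s => (1 / 2 : ℝ) * ⟪x s, P (x s)⟫) (g t) t := by
      have h3 := h1.const_mul (1 / 2 : ℝ)
      exact h3.congr_deriv (by rw [hsym]; ring)
    simpa only [hV] using h2
  have hgle : ∀ t ∈ Set.Icc (0 : ℝ) T, g t ≤ -(k / 2) * ‖x t‖ ^ 2 := by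
    intro t ht
    set D : EuclideanSpace ℝ (Fin n) →L[ℝ] EuclideanSpace ℝ (Fin n) :=
      (A (x t) - A ξ) + ((B (x t) - B ξ)).comp F with hD
    have hsplit : (A (x t) + (B (x t)).comp F) (x t)
        = (A ξ + (B ξ).comp F) (x t) + D (x t) := by
      simp only [hD, ContinuousLinearMap.add_apply, ContinuousLinearMap.sub_apply,
        ContinuousLinearMap.comp_apply, ContinuousLinearMap.coe_sub', Pi.sub_apply]
      abel
    have hDnorm : ‖D‖ ≤ ‖A (x t) - A ξ‖ + ‖B (x t) - B ξ‖ * ‖F‖ := by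
      refine (norm_add_le _ _).trans ?_
      gcongr
      exact ContinuousLinearMap.opNorm_comp_le _ _
    have hbound : ⟪x t, P (D (x t))⟫
        ≤ ‖P‖ * (‖A (x t) - A ξ‖ + ‖B (x t) - B ξ‖ * ‖F‖) * ‖x t‖ ^ 2 := by
      calc ⟪x t, P (D (x t))⟫ ≤ ‖x t‖ * ‖P (D (x t))‖ := real_inner_le_norm _ _
        _ ≤ ‖x t‖ * (‖P‖ * (‖D‖ * ‖x t‖)) := by
            gcongr
            exact (P.le_opNorm _).trans (by gcongr; exact D.le_opNorm _)
        _ ≤ ‖x t‖ * (‖P‖ * ((‖A (x t) - A ξ‖ + ‖B (x t) - B ξ‖ * ‖F‖) * ‖x t‖)) := by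
            have h0 : (0:ℝ) ≤ ‖A (x t) - A ξ‖ + ‖B (x t) - B ξ‖ * ‖F‖ := by positivity
            gcongr
        _ = ‖P‖ * (‖A (x t) - A ξ‖ + ‖B (x t) - B ξ‖ * ‖F‖) * ‖x t‖ ^ 2 := by ring
    have hnear' := hnear t ht
    have hxsq : (0:ℝ) ≤ ‖x t‖ ^ 2 := by positivity
    have hsecond : ⟪x t, P (D (x t))⟫ ≤ (k / 2) * ‖x t‖ ^ 2 :=
      hbound.trans (mul_le_mul_of_nonneg_right hnear' hxsq)
    have hfirst := hdecay (x t)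
    have : g t = ⟪x t, P ((A ξ + (B ξ).comp F) (x t))⟫ + ⟪x t, P (D (x t))⟫ := by
      rw [hg_def]
      simp only [hsplit, map_add, inner_add_right]
    rw [this]
    nlinarith [hfirst, hsecond]
  have hcontg : Continuous g := by
    have hAc : Continuous A := hA.continuous
    have hBc : Continuous B := hB.continuous
    have h1 : Continuous fun t => (A (x t)) (x t) :=
      isBoundedBilinearMap_apply.continuous.comp ((hAc.comp hxc).prodMk hxc)
    have h2 : Continuous fun t => (B (x t)) (F (x t)) :=
      isBoundedBilinearMap_apply.continuous.comp
        ((hBc.comp hxc).prodMk (F.continuous.comp hxc))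
    have h3 : Continuous fun t => (A (x t) + (B (x t)).comp F) (x t) := by
      simpa [ContinuousLinearMap.add_apply, ContinuousLinearMap.comp_apply, Pi.add_def] using h1.add h2
    exact hxc.inner (P.continuous.comp h3)
  have hcontn : Continuous fun s => ‖x s‖ ^ 2 := hxc.norm.pow 2
  have key : ∀ t ∈ Set.Icc (0 : ℝ) T, V (x t) = V ξ + ∫ s in (0:ℝ)..t, g s := by
    intro t ht
    have h := intervalIntegral.integral_eq_sub_of_hasDerivAt
      (f := fun s => V (x s)) (f' := g) (a := 0) (b := t)
      (fun s _ => hVd s) (hcontg.intervalIntegrable 0 t)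
    rw [hx0] at h
    linarith [h]
  have hineq : ∀ t ∈ Set.Icc (0 : ℝ) T,
      V (x t) ≤ V ξ - (k / 2) * ∫ s in (0:ℝ)..t, ‖x s‖ ^ 2 := by
    intro t ht
    have hmono : (∫ s in (0:ℝ)..t, g s) ≤ ∫ s in (0:ℝ)..t, -(k / 2) * ‖x s‖ ^ 2 :=
      intervalIntegral.integral_mono_on ht.1 (hcontg.intervalIntegrable 0 t)
        ((continuous_const.mul hcontn).intervalIntegrable 0 t)
        (fun s hs => hgle s ⟨hs.1, hs.2.trans ht.2⟩)
    have heq : (∫ s in (0:ℝ)..t, -(k / 2) * ‖x s‖ ^ 2)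
        = -(k / 2) * ∫ s in (0:ℝ)..t, ‖x s‖ ^ 2 :=
      intervalIntegral.integral_const_mul _ _
    rw [key t ht]
    rw [heq] at hmono
    linarith
  refine ⟨fun t ht => ?_, hineq, fun t ht => ?_⟩
  · rw [(hVd t).deriv]; exact hgle t ht
  · have hnn : (0:ℝ) ≤ ∫ s in (0:ℝ)..t, ‖x s‖ ^ 2 :=
      intervalIntegral.integral_nonneg ht.1 (fun s _ => by positivity)
    have := hineq t ht
    nlinarith
end
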